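/- arXiv:2301.11527 — 5 statements merged into one kernel-verified Lean document; each statement's English description precedes it below -/
import Mathlib

section
/- Let f : 2^V → ℝ be a submodular set function on a finite set V with f(∅) = 0, let π be a permutation of V, and let S^π_i = {π(1), …, π(i)}. Define g(π(i)) := f(S^π_i) - f(S^π_{i-1}) and the modular lower bound f_(S) := ∑_{u ∈ S} g(u). Then for every S ⊆ V, f_(S) ≤ f(S), and f_(S^π_i) = f(S^π_i) for every i. -/
open Finset

def Submodular1 {V : Type*} [DecidableEq V] (f : Finset V → ℝ) : Prop :=
  ∀ S T : Finset V, ∀ v : V, S ⊆ T → v ∉ T →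
    f (insert v T) - f T ≤ f (insert v S) - f S

/-- The chain `S^π_i = {π 0, …, π (i-1)}` induced by a permutation `π` of `Fin n`. -/
def chain1 {n : ℕ} (π : Equiv.Perm (Fin n)) (i : ℕ) : Finset (Fin n) :=
  (Finset.univ.filter (fun j : Fin n => (j : ℕ) < i)).image π

/-- The Iyer–Bilmes modular lower bound: `g (π j) = f (S^π_{j+1}) - f (S^π_j)`,
and `f_(S) = ∑_{u ∈ S} g u`. -/
noncomputable def modularLB1 {n : ℕ} (f : Finset (Fin n) → ℝ)
    (π : Equiv.Perm (Fin n)) (S : Finset (Fin n)) : ℝ :=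
  ∑ u ∈ S, (f (chain1 π ((π.symm u : ℕ) + 1)) - f (chain1 π (π.symm u : ℕ)))

theorem stmt1 {n : ℕ} (f : Finset (Fin n) → ℝ) (hf : Submodular1 f)
    (hf0 : f ∅ = 0) (π : Equiv.Perm (Fin n)) :
    (∀ S : Finset (Fin n), modularLB1 f π S ≤ f S) ∧
    (∀ i : ℕ, i ≤ n → modularLB1 f π (chain1 π i) = f (chain1 π i)) := by
  have hmem : ∀ (i : ℕ) (u : Fin n), u ∈ chain1 π i ↔ (π.symm u : ℕ) < i := by
    intro i u
    simp only [chain1, mem_image, mem_filter, mem_univ, true_and]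
    constructor
    · rintro ⟨j, hj, rfl⟩; simpa using hj
    · intro h; exact ⟨π.symm u, h, π.apply_symm_apply u⟩
  have hchain0 : chain1 π 0 = ∅ := by
    ext u; simp [hmem]
  have hchainsucc : ∀ (i : ℕ) (h : i < n),
      chain1 π (i + 1) = insert (π ⟨i, h⟩) (chain1 π i) := by
    intro i h
    ext u
    simp only [hmem, mem_insert, Nat.lt_succ_iff_lt_or_eq]
    constructor
    · rintro (hu | hu)
      · exact Or.inr hu
      · left
        have : π.symm u = ⟨i, h⟩ := Fin.ext hu
        rw [← this, π.apply_symm_apply]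
    · rintro (rfl | hu)
      · right; simp
      · exact Or.inl hu
  have hnotmem : ∀ (i : ℕ) (h : i < n), π ⟨i, h⟩ ∉ chain1 π i := by
    intro i h hc
    rw [hmem] at hc
    simp at hc
  -- equality on chain sets
  have heq : ∀ i : ℕ, i ≤ n → modularLB1 f π (chain1 π i) = f (chain1 π i) := by
    intro i
    induction i with
    | zero => intro _; simp [hchain0, modularLB1, hf0]
    | succ i ih =>
      intro hi
      have h : i < n := hi
      rw [hchainsucc i h]
      rw [modularLB1, Finset.sum_insert (hnotmem i h)]
      have hs : π.symm (π ⟨i, h⟩) = ⟨i, h⟩ := π.symm_apply_apply _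
      rw [hs]
      have := ih (le_of_lt h)
      rw [modularLB1] at this
      rw [this, ← hchainsucc i h]
      ring
  refine ⟨?_, heq⟩
  -- inequality
  intro S
  have key : ∀ i : ℕ, i ≤ n → modularLB1 f π (S ∩ chain1 π i) ≤ f (S ∩ chain1 π i) := by
    intro i
    induction i with
    | zero => intro _; simp [hchain0, modularLB1, hf0]
    | succ i ih =>
      intro hi
      have h : i < n := hi
      have ih' := ih (le_of_lt h)
      set v := π ⟨i, h⟩ with hv
      by_cases hvS : v ∈ S
      · have hins : S ∩ chain1 π (i + 1) = insert v (S ∩ chain1 π i) := by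
          rw [hchainsucc i h]
          ext u
          simp only [mem_inter, mem_insert]
          constructor
          · rintro ⟨hu, (rfl | hc)⟩
            · exact Or.inl rfl
            · exact Or.inr ⟨hu, hc⟩
          · rintro (rfl | ⟨hu, hc⟩)
            · exact ⟨hvS, Or.inl rfl⟩
            · exact ⟨hu, Or.inr hc⟩
        have hvnot : v ∉ S ∩ chain1 π i := by
          intro hc
          exact hnotmem i h (mem_of_mem_inter_right hc)
        rw [hins, modularLB1, Finset.sum_insert hvnot]
        have hs : π.symm v = ⟨i, h⟩ := π.symm_apply_apply _
        rw [hs]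
        have hsub : S ∩ chain1 π i ⊆ chain1 π i := inter_subset_right
        have hsm := hf (S ∩ chain1 π i) (chain1 π i) v hsub (hnotmem i h)
        rw [← hchainsucc i h] at hsm
        calc (f (chain1 π (i + 1)) - f (chain1 π i)) +
              ∑ u ∈ S ∩ chain1 π i, (f (chain1 π ((π.symm u : ℕ) + 1)) - f (chain1 π (π.symm u : ℕ)))
            ≤ (f (insert v (S ∩ chain1 π i)) - f (S ∩ chain1 π i)) + f (S ∩ chain1 π i) := by
              exact add_le_add hsm ih'
          _ = f (insert v (S ∩ chain1 π i)) := by ring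
      · have hsame : S ∩ chain1 π (i + 1) = S ∩ chain1 π i := by
          rw [hchainsucc i h]
          ext u
          simp only [mem_inter, mem_insert]
          constructor
          · rintro ⟨hu, (rfl | hc)⟩
            · exact absurd hu hvS
            · exact ⟨hu, hc⟩
          · rintro ⟨hu, hc⟩
            exact ⟨hu, Or.inr hc⟩
        rw [hsame]; exact ih'
  have huniv : S ∩ chain1 π n = S := by
    have : chain1 π n = univ := by
      ext u; simp [hmem, u.2, (π.symm u).2]
    rw [this, inter_univ]
  have := key n le_rfl
  rwa [huniv] at this
end

section
/- Let σ, σ̄, σ_ : 2^V → ℝ≥0 be set functions on a finite set V with σ_(S) ≤ σ(S) ≤ σ̄(S) for all S. Suppose σ̄ and σ_ are monotone and submodular with σ̄(∅) = σ_(∅) = 0, and let S̄ and S_ be (1 - 1/e)-approximate maximizers of σ̄ and σ_ respectively over sets of size at most k. Let S' be the set among {S̄, S_} maximizing σ. Then σ(S') ≥ max{ σ(S̄)/σ̄(S̄), σ_(S*)/σ(S*) } · (1 - 1/e) · σ(S*), where S* maximizes σ over sets of size at most k (assume all relevant denominators are positive). -/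
open Finset

def Submodular3 {V : Type*} [DecidableEq V] (f : Finset V → ℝ) : Prop :=
  ∀ S T : Finset V, ∀ v : V, S ⊆ T → v ∉ T →
    f (insert v T) - f T ≤ f (insert v S) - f S

def MonotoneSet3 {V : Type*} (f : Finset V → ℝ) : Prop :=
  ∀ S T : Finset V, S ⊆ T → f S ≤ f T

/-- Sandwich approximation theorem. -/
theorem stmt3 {V : Type*} [Fintype V] [DecidableEq V] (k : ℕ)
    (σ σub σlb : Finset V → ℝ)
    (hnn : ∀ S, 0 ≤ σ S) (hnnub : ∀ S, 0 ≤ σub S) (hnnlb : ∀ S, 0 ≤ σlb S)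
    (hsand : ∀ S : Finset V, σlb S ≤ σ S ∧ σ S ≤ σub S)
    (hub_mono : MonotoneSet3 σub) (hub_sub : Submodular3 σub) (hub0 : σub ∅ = 0)
    (hlb_mono : MonotoneSet3 σlb) (hlb_sub : Submodular3 σlb) (hlb0 : σlb ∅ = 0)
    (Sub Slb Sopt : Finset V)
    (hSubk : Sub.card ≤ k) (hSlbk : Slb.card ≤ k) (hSoptk : Sopt.card ≤ k)
    (hSub : ∀ T : Finset V, T.card ≤ k → (1 - 1 / Real.exp 1) * σub T ≤ σub Sub)
    (hSlb : ∀ T : Finset V, T.card ≤ k → (1 - 1 / Real.exp 1) * σlb T ≤ σlb Slb)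
    (hSopt : ∀ T : Finset V, T.card ≤ k → σ T ≤ σ Sopt)
    (hden1 : 0 < σub Sub) (hden2 : 0 < σ Sopt)
    (S' : Finset V) (hS' : S' = if σ Slb ≤ σ Sub then Sub else Slb) :
    σ S' ≥ max (σ Sub / σub Sub) (σlb Sopt / σ Sopt) *
      (1 - 1 / Real.exp 1) * σ Sopt := by
  have hc : (0:ℝ) ≤ 1 - 1 / Real.exp 1 := by
    have : (1:ℝ) ≤ Real.exp 1 := by
      have := Real.add_one_le_exp (1:ℝ); linarith
    have h1 : 1 / Real.exp 1 ≤ 1 := by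
      rw [div_le_one (by positivity)]; exact this
    linarith
  have hS'ub : σ Sub ≤ σ S' := by
    rw [hS']; split_ifs with h
    · rfl
    · linarith
  have hS'lb : σ Slb ≤ σ S' := by
    rw [hS']; split_ifs with h
    · exact h
    · rfl
  have h1 : σ Sub / σub Sub * (1 - 1 / Real.exp 1) * σ Sopt ≤ σ S' := by
    have hso : σ Sopt ≤ σub Sopt := (hsand Sopt).2
    have hgr : (1 - 1 / Real.exp 1) * σub Sopt ≤ σub Sub := hSub Sopt hSoptk
    have key : (1 - 1 / Real.exp 1) * σ Sopt ≤ σub Sub := by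
      calc (1 - 1 / Real.exp 1) * σ Sopt ≤ (1 - 1 / Real.exp 1) * σub Sopt :=
            mul_le_mul_of_nonneg_left hso hc
        _ ≤ σub Sub := hgr
    have : σ Sub / σub Sub * (1 - 1 / Real.exp 1) * σ Sopt ≤ σ Sub := by
      rw [div_mul_eq_mul_div, div_mul_eq_mul_div, div_le_iff₀ hden1, mul_assoc]
      exact mul_le_mul_of_nonneg_left key (hnn Sub)
    linarith
  have h2 : σlb Sopt / σ Sopt * (1 - 1 / Real.exp 1) * σ Sopt ≤ σ S' := by
    have hgr : (1 - 1 / Real.exp 1) * σlb Sopt ≤ σlb Slb := hSlb Sopt hSoptk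
    have : σlb Sopt / σ Sopt * (1 - 1 / Real.exp 1) * σ Sopt
        = (1 - 1 / Real.exp 1) * σlb Sopt := by
      field_simp
    rw [this]
    have := (hsand Slb).1
    linarith
  rcases max_cases (σ Sub / σub Sub) (σlb Sopt / σ Sopt) with ⟨he, _⟩ | ⟨he, _⟩ <;>
    rw [he] <;> [exact h1; exact h2]
end

section
/- Let f : 2^V → ℝ≥0 be monotone and submodular with f(∅) = 0 on a finite set V. Let S_k be constructed greedily: S_0 = ∅ and S_i = S_{i-1} ∪ {u_i} where u_i maximizes f(S_{i-1} ∪ {u}) - f(S_{i-1}) over u ∈ V. Then f(S_k) ≥ (1 - (1 - 1/k)^k) · max_{|T| ≤ k} f(T) ≥ (1 - 1/e) · max_{|T| ≤ k} f(T). -/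
open Finset

def Submodular11 {V : Type*} [DecidableEq V] (f : Finset V → ℝ) : Prop :=
  ∀ S T : Finset V, ∀ v : V, S ⊆ T → v ∉ T →
    f (insert v T) - f T ≤ f (insert v S) - f S

def MonotoneSet11 {V : Type*} (f : Finset V → ℝ) : Prop :=
  ∀ S T : Finset V, S ⊆ T → f S ≤ f T

/-! Each greedy step gains at least `1/k` of the remaining gap to any `T` with `|T| ≤ k`: by
submodularity `f T - f S ≤ ∑_{v ∈ T} (f (S ∪ {v}) - f S)`, and each summand is at most the greedy
gain. Hence the gap shrinks by the factor `1 - 1/k` per step, and `(1 - 1/k)^k ≤ e⁻¹`. -/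

section Greedy

variable {V : Type*} [DecidableEq V] {f : Finset V → ℝ}

theorem Submodular11.le_add_sum_marginal (hsub : Submodular11 f) (hmono : MonotoneSet11 f)
    (S T : Finset V) : f (S ∪ T) ≤ f S + ∑ v ∈ T, (f (insert v S) - f S) := by
  induction T using Finset.induction_on with
  | empty => simp
  | insert a T haT ih =>
    rw [sum_insert haT, union_insert]
    by_cases ha : a ∈ S ∪ T
    · have hgain : 0 ≤ f (insert a S) - f S := sub_nonneg.2 (hmono _ _ (subset_insert _ _))
      rw [insert_eq_of_mem ha]
      linarith
    · have := hsub S (S ∪ T) a subset_union_left ha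
      linarith

theorem Submodular11.sub_le_card_mul_max_gain (hsub : Submodular11 f) (hmono : MonotoneSet11 f)
    {S : Finset V} {u : V} (hu : ∀ v, f (insert v S) - f S ≤ f (insert u S) - f S)
    (T : Finset V) : f T - f S ≤ #T * (f (insert u S) - f S) := by
  calc f T - f S ≤ f (S ∪ T) - f S := by linarith [hmono _ _ (subset_union_right : T ⊆ S ∪ T)]
    _ ≤ ∑ v ∈ T, (f (insert v S) - f S) := by linarith [hsub.le_add_sum_marginal hmono S T]
    _ ≤ ∑ _v ∈ T, (f (insert u S) - f S) := sum_le_sum fun v _ ↦ hu v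
    _ = #T * (f (insert u S) - f S) := by rw [sum_const, nsmul_eq_mul]

theorem Submodular11.greedy_step_gap_le (hsub : Submodular11 f) (hmono : MonotoneSet11 f)
    {k : ℕ} (hk : 0 < k) {S T : Finset V} (hT : #T ≤ k) {u : V}
    (hu : ∀ v, f (insert v S) - f S ≤ f (insert u S) - f S) :
    f T - f (insert u S) ≤ (1 - 1 / (k : ℝ)) * (f T - f S) := by
  have hk' : (0 : ℝ) < k := by exact_mod_cast hk
  have hgain : 0 ≤ f (insert u S) - f S := sub_nonneg.2 (hmono _ _ (subset_insert _ _))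
  have hgap : f T - f S ≤ k * (f (insert u S) - f S) :=
    (hsub.sub_le_card_mul_max_gain hmono hu T).trans
      (mul_le_mul_of_nonneg_right (by exact_mod_cast hT) hgain)
  have hshare : (f T - f S) / k ≤ f (insert u S) - f S := by
    rwa [div_le_iff₀ hk', mul_comm]
  calc f T - f (insert u S) ≤ (f T - f S) - (f T - f S) / k := by linarith
    _ = (1 - 1 / (k : ℝ)) * (f T - f S) := by field_simp

end Greedy

theorem le_pow_mul_of_le_mul {g : ℕ → ℝ} {c : ℝ} (hc : 0 ≤ c) {k : ℕ}
    (h : ∀ i < k, g (i + 1) ≤ c * g i) : ∀ i ≤ k, g i ≤ c ^ i * g 0 := by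
  intro i
  induction i with
  | zero => simp
  | succ i ih =>
    intro hi
    calc g (i + 1) ≤ c * g i := h i hi
      _ ≤ c * (c ^ i * g 0) := mul_le_mul_of_nonneg_left (ih (by omega)) hc
      _ = c ^ (i + 1) * g 0 := by ring

theorem one_sub_one_div_pow_le_inv_exp {k : ℕ} (hk : 1 ≤ k) :
    (1 - 1 / (k : ℝ)) ^ k ≤ 1 / Real.exp 1 := by
  rw [one_div (Real.exp 1), ← Real.exp_neg]
  exact Real.one_sub_div_pow_le_exp_neg (by exact_mod_cast hk)

theorem stmt11_general {V : Type*} [DecidableEq V]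
    (f : Finset V → ℝ)
    (hmono : MonotoneSet11 f) (hsub : Submodular11 f) (h0 : f ∅ = 0)
    (k : ℕ) (hk : 1 ≤ k) (S : ℕ → Finset V) (hS0 : S 0 = ∅)
    (hgreedy : ∀ i < k, ∃ u : V, S (i + 1) = insert u (S i) ∧
      ∀ v : V, f (insert v (S i)) - f (S i) ≤ f (insert u (S i)) - f (S i)) :
    ∀ T : Finset V, T.card ≤ k →
      f (S k) ≥ (1 - (1 - 1 / (k : ℝ)) ^ k) * f T ∧
      f (S k) ≥ (1 - 1 / Real.exp 1) * f T := by
  intro T hT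
  have hstep : ∀ i < k, f T - f (S (i + 1)) ≤ (1 - 1 / (k : ℝ)) * (f T - f (S i)) := by
    intro i hi
    obtain ⟨u, hSu, hu⟩ := hgreedy i hi
    rw [hSu]
    exact hsub.greedy_step_gap_le hmono (by omega) hT hu
  have hgap : f T - f (S k) ≤ (1 - 1 / (k : ℝ)) ^ k * f T := by
    simpa only [hS0, h0, sub_zero] using le_pow_mul_of_le_mul (g := fun i ↦ f T - f (S i))
      (Nat.one_sub_one_div_cast_nonneg k) hstep k le_rfl
  have hfT : 0 ≤ f T := h0 ▸ hmono ∅ T (empty_subset T)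
  have hexp := mul_le_mul_of_nonneg_right (one_sub_one_div_pow_le_inv_exp hk) hfT
  constructor <;> linarith

/-- Nemhauser–Wolsey–Fisher greedy guarantee for monotone submodular
maximization under a cardinality constraint. -/
theorem stmt11 {V : Type*} [Fintype V] [DecidableEq V]
    (f : Finset V → ℝ) (hnn : ∀ S, 0 ≤ f S)
    (hmono : MonotoneSet11 f) (hsub : Submodular11 f) (h0 : f ∅ = 0)
    (k : ℕ) (hk : 1 ≤ k) (S : ℕ → Finset V) (hS0 : S 0 = ∅)
    (hgreedy : ∀ i < k, ∃ u : V, S (i + 1) = insert u (S i) ∧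
      ∀ v : V, f (insert v (S i)) - f (S i) ≤ f (insert u (S i)) - f (S i)) :
    ∀ T : Finset V, T.card ≤ k →
      f (S k) ≥ (1 - (1 - 1 / (k : ℝ)) ^ k) * f T ∧
      f (S k) ≥ (1 - 1 / Real.exp 1) * f T :=
  stmt11_general f hmono hsub h0 k hk S hS0 hgreedy
end

section
/- Let f : 2^V → ℝ≥0 be monotone and submodular with f(∅) = 0, and let S be any set with f(S ∪ {u}) - f(S) ≤ η for all u ∉ S, constructed after k greedy steps each incurring additive error at most c ≥ 0 (i.e., f(S_i) - f(S_{i-1}) ≥ max_u (f(S_{i-1}∪{u}) - f(S_{i-1})) - c). Then f(S_k) ≥ (1 - 1/e) · max_{|T| ≤ k} f(T) - k·c. -/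
open Finset

def Submodular12 {V : Type*} [DecidableEq V] (f : Finset V → ℝ) : Prop :=
  ∀ S T : Finset V, ∀ v : V, S ⊆ T → v ∉ T →
    f (insert v T) - f T ≤ f (insert v S) - f S

def MonotoneSet12 {V : Type*} (f : Finset V → ℝ) : Prop :=
  ∀ S T : Finset V, S ⊆ T → f S ≤ f T

lemma expand12 {V : Type*} [DecidableEq V] (f : Finset V → ℝ)
    (hsub : Submodular12 f) (A T : Finset V) :
    f (A ∪ T) - f A ≤ ∑ v ∈ T \ A, (f (insert v A) - f A) := by
  induction T using Finset.induction_on with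
  | empty => simp
  | @insert a T ha ih =>
    by_cases haA : a ∈ A
    · have h1 : A ∪ insert a T = A ∪ T := by
        rw [Finset.union_insert, Finset.insert_eq_self.2 (Finset.mem_union_left T haA)]
      have h2 : insert a T \ A = T \ A := Finset.insert_sdiff_of_mem _ haA
      rw [h1, h2]; exact ih
    · have h2 : insert a T \ A = insert a (T \ A) :=
        Finset.insert_sdiff_of_notMem _ haA
      have hnotmem : a ∉ T \ A := by simp [ha]
      rw [Finset.union_insert, h2, Finset.sum_insert hnotmem]
      have key : f (insert a (A ∪ T)) - f (A ∪ T) ≤ f (insert a A) - f A :=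
        hsub A (A ∪ T) a Finset.subset_union_left (by simp [haA, ha])
      linarith

/-- Approximate-greedy `(1 - 1/e)` guarantee: if each of the `k` greedy steps
selects an element within additive error `c` of the best marginal gain, the
final guarantee degrades by at most `k·c`. -/
theorem stmt12 {V : Type*} [Fintype V] [DecidableEq V]
    (f : Finset V → ℝ) (hnn : ∀ S, 0 ≤ f S)
    (hmono : MonotoneSet12 f) (hsub : Submodular12 f) (h0 : f ∅ = 0)
    (k : ℕ) (hk : 1 ≤ k) (c : ℝ) (hc : 0 ≤ c)
    (S : ℕ → Finset V) (hS0 : S 0 = ∅)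
    (hgreedy : ∀ i < k, ∃ u : V, S (i + 1) = insert u (S i) ∧
      ∀ v : V, f (insert v (S i)) - f (S i) - c ≤ f (S (i + 1)) - f (S i)) :
    ∀ T : Finset V, T.card ≤ k →
      f (S k) ≥ (1 - 1 / Real.exp 1) * f T - (k : ℝ) * c := by
  intro T hT
  have hk0 : (0:ℝ) < (k:ℝ) := by exact_mod_cast hk
  set r : ℝ := 1 - 1 / (k:ℝ) with hr
  have hr0 : 0 ≤ r := by
    have : 1 / (k:ℝ) ≤ 1 := by
      rw [div_le_one hk0]; exact_mod_cast hk
    rw [hr]; linarith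
  have hr1 : r ≤ 1 := by
    have : 0 < 1 / (k:ℝ) := by positivity
    rw [hr]; linarith
  have step : ∀ i < k, f T - f (S (i+1)) ≤ r * (f T - f (S i)) + c := by
    intro i hi
    obtain ⟨u, hu, hbound⟩ := hgreedy i hi
    have hM0 : 0 ≤ f (S (i+1)) - f (S i) + c := by
      have : f (S i) ≤ f (S (i+1)) := by
        rw [hu]; exact hmono _ _ (Finset.subset_insert _ _)
      linarith
    have hchain : f T - f (S i) ≤ (k:ℝ) * (f (S (i+1)) - f (S i) + c) := by
      have h1 : f T ≤ f (S i ∪ T) := hmono _ _ Finset.subset_union_right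
      have h2 := expand12 f hsub (S i) T
      have h3 : ∑ v ∈ T \ S i, (f (insert v (S i)) - f (S i)) ≤
          (T \ S i).card • (f (S (i+1)) - f (S i) + c) := by
        apply Finset.sum_le_card_nsmul
        intro v hv
        have := hbound v
        linarith
      have hcard : ((T \ S i).card : ℝ) ≤ (k:ℝ) := by
        have : (T \ S i).card ≤ T.card := Finset.card_le_card (Finset.sdiff_subset)
        exact_mod_cast this.trans hT
      have h4 : ((T \ S i).card : ℝ) * (f (S (i+1)) - f (S i) + c) ≤
          (k:ℝ) * (f (S (i+1)) - f (S i) + c) :=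
        mul_le_mul_of_nonneg_right hcard hM0
      rw [nsmul_eq_mul] at h3
      linarith
    have hdiv : (f T - f (S i)) / (k:ℝ) ≤ f (S (i+1)) - f (S i) + c := by
      rw [div_le_iff₀ hk0]; linarith [mul_comm (f (S (i+1)) - f (S i) + c) (k:ℝ)]
    have hrw : r * (f T - f (S i)) = (f T - f (S i)) - (f T - f (S i)) / (k:ℝ) := by
      rw [hr]; ring
    rw [hrw]; linarith
  have main : ∀ i ≤ k, f T - f (S i) ≤ r ^ i * f T + (i:ℝ) * c := by
    intro i
    induction i with
    | zero => intro _; simp [hS0, h0]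
    | succ n ih =>
      intro hn1
      have hn : n < k := hn1
      have h1 := step n hn
      have h2 := ih (Nat.le_of_lt hn)
      have h3 : r * (f T - f (S n)) ≤ r * (r ^ n * f T + (n:ℝ) * c) :=
        mul_le_mul_of_nonneg_left h2 hr0
      have h4 : r * ((n:ℝ) * c) ≤ (n:ℝ) * c := by
        have hnc : 0 ≤ (n:ℝ) * c := by positivity
        nlinarith
      have : r * (r ^ n * f T + (n:ℝ) * c) = r ^ (n+1) * f T + r * ((n:ℝ) * c) := by
        ring
      push_cast
      nlinarith
  have hfinal := main k le_rfl
  have hrexp : r ≤ Real.exp (-(1 / (k:ℝ))) := by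
    have := Real.add_one_le_exp (-(1 / (k:ℝ)))
    linarith
  have hpow : r ^ k ≤ 1 / Real.exp 1 := by
    calc r ^ k ≤ (Real.exp (-(1 / (k:ℝ)))) ^ k := pow_le_pow_left₀ hr0 hrexp k
      _ = Real.exp ((k:ℝ) * (-(1 / (k:ℝ)))) := (Real.exp_nat_mul _ k).symm
      _ = Real.exp (-1) := by
          congr 1
          field_simp
      _ = 1 / Real.exp 1 := by rw [Real.exp_neg]; ring
  have hmul : r ^ k * f T ≤ (1 / Real.exp 1) * f T :=
    mul_le_mul_of_nonneg_right hpow (hnn T)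
  linarith
end

section
/- There exists a finite directed graph G and a partition of its vertices into positive, neutral, and negative sets such that the opinion-aware influence spread function I_G (with all edge probabilities equal to 1, so I_G(S) = #{positive vertices reachable from S} - #{negative vertices reachable from S}) is neither submodular nor supermodular. Concretely, for the 10-node graph of the paper with positives {u1,u2,u4,u5}, neutrals {u3,u10}, negatives {u6,u7,u8,u9}: I({u4,u7}) - I({u4}) = -1 > I({u7}) - I(∅) = -2 (violating submodularity), and I({u1,u2}) - I({u1}) = 0 < I({u2}) - I(∅) = 1 (violating supermodularity). -/
open Finset

attribute [local instance] Classical.propDecidable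

def Submodular14 (f : Finset (Fin 10) → ℝ) : Prop :=
  ∀ S T : Finset (Fin 10), ∀ v : Fin 10, S ⊆ T → v ∉ T →
    f (insert v T) - f T ≤ f (insert v S) - f S

def Supermodular14 (f : Finset (Fin 10) → ℝ) : Prop :=
  ∀ S T : Finset (Fin 10), ∀ v : Fin 10, S ⊆ T → v ∉ T →
    f (insert v S) - f S ≤ f (insert v T) - f T

/-- Edges of the 10-node counterexample graph (nodes `0,…,9` standing for
`u1,…,u10`): `u1 → u2`, `u4 → u8`, `u7 → u8`. -/
def edge14 : Fin 10 → Fin 10 → Prop := fun a b =>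
  (a, b) ∈ ({((0 : Fin 10), (1 : Fin 10)), (3, 7), (6, 7)} : Set (Fin 10 × Fin 10))

/-- Positive users `{u1, u2, u4, u5}`. -/
def pos14 : Finset (Fin 10) := {0, 1, 3, 4}

/-- Negative users `{u6, u7, u8, u9}`. -/
def neg14 : Finset (Fin 10) := {5, 6, 7, 8}

/-- Opinion-aware influence spread with all edge probabilities equal to `1`:
number of positive vertices reachable from `S` minus the number of negative
vertices reachable from `S`. -/
noncomputable def I14 (S : Finset (Fin 10)) : ℝ :=
  ((Finset.univ.filter
      (fun v => v ∈ pos14 ∧ ∃ u ∈ S, Relation.ReflTransGen edge14 u v)).card : ℝ)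
  - ((Finset.univ.filter
      (fun v => v ∈ neg14 ∧ ∃ u ∈ S, Relation.ReflTransGen edge14 u v)).card : ℝ)

lemma edge14_iff (a b : Fin 10) :
    edge14 a b ↔ (a = 0 ∧ b = 1) ∨ (a = 3 ∧ b = 7) ∨ (a = 6 ∧ b = 7) := by
  simp [edge14, Prod.ext_iff]

lemma reach_iff (u v : Fin 10) :
    Relation.ReflTransGen edge14 u v ↔
      u = v ∨ (u = 0 ∧ v = 1) ∨ (u = 3 ∧ v = 7) ∨ (u = 6 ∧ v = 7) := by
  constructor
  · intro h
    induction h with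
    | refl => left; rfl
    | tail h1 h2 ih =>
      rw [edge14_iff] at h2
      rcases ih with rfl | ⟨rfl, rfl⟩ | ⟨rfl, rfl⟩ | ⟨rfl, rfl⟩
      · tauto
      all_goals
        exfalso
        rcases h2 with ⟨ha, _⟩ | ⟨ha, _⟩ | ⟨ha, _⟩ <;> exact absurd ha (by decide)
  · rintro (rfl | h | h | h)
    · exact Relation.ReflTransGen.refl
    all_goals exact Relation.ReflTransGen.single (by rw [edge14_iff]; tauto)

lemma reachFilterEq (S E : Finset (Fin 10)) (P : Finset (Fin 10))
    (h : ∀ v : Fin 10, (v ∈ P ∧ ∃ u ∈ S,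
      u = v ∨ (u = 0 ∧ v = 1) ∨ (u = 3 ∧ v = 7) ∨ (u = 6 ∧ v = 7)) ↔ v ∈ E) :
    (Finset.univ.filter
      (fun v => v ∈ P ∧ ∃ u ∈ S, Relation.ReflTransGen edge14 u v)) = E := by
  ext v
  simp only [Finset.mem_filter, Finset.mem_univ, true_and, reach_iff]
  exact h v

lemma I36 : I14 {3, 6} = -1 := by
  unfold I14
  rw [reachFilterEq {3, 6} {3} pos14 (by decide),
      reachFilterEq {3, 6} {6, 7} neg14 (by decide),
      show (({6, 7} : Finset (Fin 10))).card = 2 from by decide]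
  norm_num

lemma I3 : I14 {3} = 0 := by
  unfold I14
  rw [reachFilterEq {3} {3} pos14 (by decide),
      reachFilterEq {3} {7} neg14 (by decide)]
  norm_num

lemma I6 : I14 {6} = -2 := by
  unfold I14
  rw [reachFilterEq {6} ∅ pos14 (by decide),
      reachFilterEq {6} {6, 7} neg14 (by decide),
      show (({6, 7} : Finset (Fin 10))).card = 2 from by decide]
  norm_num

lemma Iempty : I14 ∅ = 0 := by
  unfold I14
  rw [reachFilterEq ∅ ∅ pos14 (by decide),
      reachFilterEq ∅ ∅ neg14 (by decide)]
  norm_num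

lemma I01 : I14 {0, 1} = 2 := by
  unfold I14
  rw [reachFilterEq {0, 1} {0, 1} pos14 (by decide),
      reachFilterEq {0, 1} ∅ neg14 (by decide)]
  norm_num

lemma I0 : I14 {0} = 2 := by
  unfold I14
  rw [reachFilterEq {0} {0, 1} pos14 (by decide),
      reachFilterEq {0} ∅ neg14 (by decide)]
  norm_num

lemma I1 : I14 {1} = 1 := by
  unfold I14
  rw [reachFilterEq {1} {1} pos14 (by decide),
      reachFilterEq {1} ∅ neg14 (by decide)]
  norm_num

/-- The opinion-aware influence spread of the 10-node counterexample graph is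
neither submodular nor supermodular. -/
theorem stmt14 :
    I14 {3, 6} - I14 {3} = -1 ∧
    I14 {6} - I14 ∅ = -2 ∧
    I14 {3, 6} - I14 {3} > I14 {6} - I14 ∅ ∧
    I14 {0, 1} - I14 {0} = 0 ∧
    I14 {1} - I14 ∅ = 1 ∧
    I14 {0, 1} - I14 {0} < I14 {1} - I14 ∅ ∧
    ¬ Submodular14 I14 ∧ ¬ Supermodular14 I14 := by
  have e1 : (insert (6 : Fin 10) ({3} : Finset (Fin 10))) = {3, 6} := by decide
  have e2 : (insert (6 : Fin 10) (∅ : Finset (Fin 10))) = {6} := by decide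
  have e3 : (insert (1 : Fin 10) ({0} : Finset (Fin 10))) = {0, 1} := by decide
  have e4 : (insert (1 : Fin 10) (∅ : Finset (Fin 10))) = {1} := by decide
  refine ⟨by rw [I36, I3]; norm_num, by rw [I6, Iempty]; norm_num,
    by rw [I36, I3, I6, Iempty]; norm_num,
    by rw [I01, I0]; norm_num, by rw [I1, Iempty]; norm_num,
    by rw [I01, I0, I1, Iempty]; norm_num, ?_, ?_⟩
  · intro h
    have := h ∅ {3} 6 (by simp) (by decide)
    rw [e1, e2, I36, I3, I6, Iempty] at this
    norm_num at this
  · intro h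
    have := h ∅ {0} 1 (by simp) (by decide)
    rw [e3, e4, I01, I0, I1, Iempty] at this
    norm_num at this
end
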